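/- arXiv:1908.06570 — 5 statements merged into one kernel-verified Lean document; each statement's English description precedes it below -/
import Mathlib

section
/- Suppose there exists a t-(v,k,1)-design with t ≤ k/2 + 1, and let t0 be a positive integer with t/2 ≤ t0 ≤ t − 1. Then there exists a (K,F,Q,S) placement delivery array with K = b, F = C(v,t0), Q = C(v,t0) − C(k,t0), and S = C(v,t0), where b = C(v,t)/C(k,t). -/
open Finset

/-- A `(K, F, Q, S)` placement delivery array: an `F × K` array with entries in
`[S] ∪ {*}` (where `none` plays the role of `*`) satisfying conditions C1, C2, C3. -/
def IsPDA {K F S : ℕ} (Q : ℕ) (P : Fin F → Fin K → Option (Fin S)) : Prop :=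
  -- C1: the symbol `*` appears exactly `Q` times in each column
  (∀ k : Fin K, (univ.filter fun j : Fin F => P j k = none).card = Q) ∧
  -- C2: each integer `s ∈ [S]` occurs at least once in the array
  (∀ s : Fin S, ∃ j k, P j k = some s) ∧
  -- C3
  (∀ (j₁ j₂ : Fin F) (k₁ k₂ : Fin K) (s : Fin S), (j₁, k₁) ≠ (j₂, k₂) →
    P j₁ k₁ = some s → P j₂ k₂ = some s →
    j₁ ≠ j₂ ∧ k₁ ≠ k₂ ∧ P j₁ k₂ = none ∧ P j₂ k₁ = none)

/-- There exists a `(K, F, Q, S)` placement delivery array. -/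
def ExistsPDA (K F Q S : ℕ) : Prop :=
  ∃ P : Fin F → Fin K → Option (Fin S), IsPDA Q P

/-- A `t`-`(v,k,1)` design (Steiner system `S(t,k,v)`): `V` is a `v`-set, each block
is a `k`-subset of `V`, and every `t`-subset of `V` lies in exactly one block. -/
def IsSteinerSystem {V : Type} [Fintype V] [DecidableEq V] (B : Finset (Finset V))
    (t v k : ℕ) : Prop :=
  Fintype.card V = v ∧ (∀ blk ∈ B, blk.card = k) ∧
  (∀ T : Finset V, T.card = t → (B.filter fun blk => T ⊆ blk).card = 1)


/-
Rows and symbols are the `t0`-subsets of the point set and columns are the blocks. In a block `b`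
the `t0`-subsets of `b` are permuted by some `σ_b` sending each `T` to a set disjoint from it; such a
permutation exists by Hall's theorem because the disjointness graph on the `t0`-subsets of `b` is
regular of positive degree when `2 t0 ≤ k`. Entry `(T, b)` is `σ_b T` if `T ⊆ b` and `*` otherwise.
If a symbol `S` occurs at `(T₁, b₁)` and `(T₂, b₂)` with `b₁ ≠ b₂` and also `T₁ ⊆ b₂`, then the
set `T₁ ∪ S` of size `2 t0 ≥ t` lies in both blocks, contradicting the Steiner property.
-/

def IsPDAOn {R C Sy : Type*} [Fintype R] [DecidableEq Sy] (Q : ℕ) (P : R → C → Option Sy) :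
    Prop :=
  (∀ c : C, #{j | P j c = none} = Q) ∧
  (∀ s : Sy, ∃ j c, P j c = some s) ∧
  (∀ (j₁ j₂ : R) (c₁ c₂ : C) (s : Sy), (j₁, c₁) ≠ (j₂, c₂) →
    P j₁ c₁ = some s → P j₂ c₂ = some s →
    j₁ ≠ j₂ ∧ c₁ ≠ c₂ ∧ P j₁ c₂ = none ∧ P j₂ c₁ = none)

theorem ExistsPDA.of_isPDAOn {R C Sy : Type*} [Fintype R] [Fintype C] [Fintype Sy]
    [DecidableEq Sy] {Q : ℕ} {P : R → C → Option Sy} (hP : IsPDAOn Q P) :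
    ExistsPDA (Fintype.card C) (Fintype.card R) Q (Fintype.card Sy) := by
  let eR := Fintype.equivFin R
  let eC := Fintype.equivFin C
  let eS := Fintype.equivFin Sy
  have map_eq_some {x : Option Sy} {s} : x.map eS = some s ↔ x = some (eS.symm s) := by
    simp [Option.map_eq_some_iff, ← Equiv.eq_symm_apply]
  obtain ⟨hstar, hocc, hpair⟩ := hP
  refine ⟨fun j c => (P (eR.symm j) (eC.symm c)).map eS, fun c => ?_, fun s => ?_, ?_⟩
  · simp only [Option.map_eq_none_iff]
    rw [← hstar (eC.symm c)]
    exact card_equiv eR.symm (by simp)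
  · obtain ⟨j, c, h⟩ := hocc (eS.symm s)
    exact ⟨eR j, eC c, by simp [h]⟩
  · intro j₁ j₂ c₁ c₂ s hne h₁ h₂
    rw [map_eq_some] at h₁ h₂
    have hne' : (eR.symm j₁, eC.symm c₁) ≠ (eR.symm j₂, eC.symm c₂) := by simpa using hne
    obtain ⟨hj, hc, h₁₂, h₂₁⟩ := hpair _ _ _ _ _ hne' h₁ h₂
    exact ⟨by simpa using hj, by simpa using hc, by simp [h₁₂], by simp [h₂₁]⟩

theorem Finset.exists_bijOn_rel_of_regular {ι : Type*} [DecidableEq ι] {s : Finset ι}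
    (r : ι → ι → Prop) [DecidableRel r] {d : ℕ} (hd : 0 < d)
    (hout : ∀ i ∈ s, d ≤ #{j ∈ s | r i j}) (hin : ∀ j ∈ s, #{i ∈ s | r i j} ≤ d) :
    ∃ σ : ι → ι, Set.BijOn σ s s ∧ ∀ i ∈ s, r i (σ i) := by
  let nbhd : s → Finset ι := fun i => {j ∈ s | r i j}
  -- Hall's condition, by double counting the edges leaving a set `A` of vertices.
  have hall : ∀ A : Finset s, #A ≤ #(A.biUnion nbhd) := by
    intro A
    refine Nat.le_of_mul_le_mul_right (card_mul_le_card_mul (s := A) (t := A.biUnion nbhd) (fun (i : s) (j : ι) => r i j) (fun i hi => ?_)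
      (fun j hj => ?_)) hd
    · refine (hout i i.2).trans (card_le_card fun j hj => ?_)
      exact (mem_bipartiteAbove _).2 ⟨mem_biUnion.2 ⟨i, hi, hj⟩, (mem_filter.1 hj).2⟩
    · obtain ⟨i₀, -, hj⟩ := mem_biUnion.1 hj
      refine le_trans (card_le_card_of_injOn Subtype.val (fun i hi => ?_)
        Subtype.val_injective.injOn) (hin j (mem_filter.1 hj).1)
      exact mem_filter.2 ⟨i.2, (mem_bipartiteBelow _).1 hi |>.2⟩
  obtain ⟨f, hinj, hf⟩ := (all_card_le_biUnion_card_iff_exists_injective nbhd).1 hall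
  refine ⟨fun i => if h : i ∈ s then f ⟨i, h⟩ else i, ?_, fun i hi => ?_⟩
  · have hmaps : Set.MapsTo (fun i => if h : i ∈ s then f ⟨i, h⟩ else i) s s :=
      fun i hi => by simpa [dif_pos (mem_coe.1 hi)] using (mem_filter.1 (hf ⟨i, hi⟩)).1
    have hinjOn : Set.InjOn (fun i => if h : i ∈ s then f ⟨i, h⟩ else i) s := by
      intro i hi j hj hij
      simp only [dif_pos (mem_coe.1 hi), dif_pos (mem_coe.1 hj)] at hij
      exact congrArg Subtype.val (hinj hij)
    exact ⟨hmaps, hinjOn, surjOn_of_injOn_of_card_le _ hmaps hinjOn le_rfl⟩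
  · simpa [dif_pos hi] using (mem_filter.1 (hf ⟨i, hi⟩)).2

theorem Finset.card_filter_disjoint_powersetCard {α : Type*} [DecidableEq α] {s T : Finset α}
    (hT : T ⊆ s) (n : ℕ) :
    #{U ∈ s.powersetCard n | Disjoint T U} = (#s - #T).choose n := by
  have : {U ∈ s.powersetCard n | Disjoint T U} = (s \ T).powersetCard n := by
    ext U
    simp only [mem_filter, mem_powersetCard, subset_sdiff, disjoint_comm (a := T)]
    tauto
  rw [this, card_powersetCard, card_sdiff_of_subset hT]

theorem Finset.exists_bijOn_powersetCard_disjoint {α : Type*} [DecidableEq α] {s : Finset α}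
    {n : ℕ} (hn : 2 * n ≤ #s) :
    ∃ σ : Finset α → Finset α, Set.BijOn σ (s.powersetCard n) (s.powersetCard n) ∧
      ∀ T ∈ s.powersetCard n, Disjoint T (σ T) := by
  have hdeg : ∀ T ∈ s.powersetCard n, #{U ∈ s.powersetCard n | Disjoint T U} = (#s - n).choose n :=
    fun T hT => by
      obtain ⟨hTs, hTn⟩ := mem_powersetCard.1 hT
      rw [card_filter_disjoint_powersetCard hTs, hTn]
  refine exists_bijOn_rel_of_regular Disjoint (Nat.choose_pos (by omega))
    (fun T hT => (hdeg T hT).ge) (fun U hU => ?_)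
  simp_rw [disjoint_comm (b := U)]
  exact (hdeg U hU).le

namespace IsSteinerSystem

variable {V : Type} [Fintype V] [DecidableEq V] {B : Finset (Finset V)} {t v k : ℕ}

theorem card_mul_choose (hdes : IsSteinerSystem B t v k) : #B * k.choose t = v.choose t := by
  obtain ⟨hV, hB, huniq⟩ := hdes
  have h := card_mul_eq_card_mul (fun (b T : Finset V) => T ⊆ b) (s := B)
    (t := (univ : Finset V).powersetCard t) (m := k.choose t) (n := 1)
    (fun b hb => ?_) (fun T hT => huniq T (mem_powersetCard.1 hT).2)
  · rwa [mul_one, card_powersetCard, card_univ, hV] at h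
  · rw [← hB b hb, ← card_powersetCard]
    congr 1
    ext T
    simp [mem_bipartiteAbove, mem_powersetCard, and_comm]

theorem eq_of_subset (hdes : IsSteinerSystem B t v k) {W b₁ b₂ : Finset V} (hW : t ≤ #W)
    (hb₁ : b₁ ∈ B) (hb₂ : b₂ ∈ B) (h₁ : W ⊆ b₁) (h₂ : W ⊆ b₂) : b₁ = b₂ := by
  obtain ⟨T, hTW, hT⟩ := exists_subset_card_eq hW
  obtain ⟨b, hb⟩ := card_eq_one.1 (hdes.2.2 T hT)
  have hmem : ∀ b' ∈ B, W ⊆ b' → b' = b := fun b' hb' h =>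
    mem_singleton.1 (hb ▸ mem_filter.2 ⟨hb', hTW.trans h⟩)
  rw [hmem b₁ hb₁ h₁, hmem b₂ hb₂ h₂]

theorem exists_superset (hdes : IsSteinerSystem B t v k) {T : Finset V} (hT : #T ≤ t)
    (htv : t ≤ v) : ∃ b ∈ B, T ⊆ b := by
  obtain ⟨W, hTW, -, hW⟩ := exists_subsuperset_card_eq (subset_univ T) hT
    (by rwa [card_univ, hdes.1])
  obtain ⟨b, hb⟩ := card_eq_one.1 (hdes.2.2 W hW)
  obtain ⟨hbB, hWb⟩ := mem_filter.1 (hb ▸ mem_singleton_self b)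
  exact ⟨b, hbB, hTW.trans hWb⟩

end IsSteinerSystem

section SteinerArray

variable {V : Type} [DecidableEq V] {B : Finset (Finset V)} {t v k t0 : ℕ}
  {σ : Finset V → Finset V → Finset V}

def steinerArray (B : Finset (Finset V)) (t0 : ℕ) (σ : Finset V → Finset V → Finset V)
    (hσ : ∀ b ∈ B, Set.MapsTo (σ b) (b.powersetCard t0) (b.powersetCard t0))
    (T : {T : Finset V // #T = t0}) (b : B) : Option {T : Finset V // #T = t0} :=
  if h : T.1 ⊆ b then
    some ⟨σ b T, (mem_powersetCard.1 (hσ b b.2 (mem_powersetCard.2 ⟨h, T.2⟩))).2⟩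
  else none

variable {hσ : ∀ b ∈ B, Set.MapsTo (σ b) (b.powersetCard t0) (b.powersetCard t0)}

theorem steinerArray_eq_none_iff {T : {T : Finset V // #T = t0}} {b : B} :
    steinerArray B t0 σ hσ T b = none ↔ ¬ T.1 ⊆ b := by
  unfold steinerArray
  split_ifs with h <;> simp [h]

theorem steinerArray_eq_some_iff {T S : {T : Finset V // #T = t0}} {b : B} :
    steinerArray B t0 σ hσ T b = some S ↔ T.1 ⊆ b ∧ σ b T = S := by
  unfold steinerArray
  split_ifs with h <;> simp [h, Subtype.ext_iff]

theorem card_filter_steinerArray_eq_none [Fintype V] (hdes : IsSteinerSystem B t v k) (b : B) :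
    #{T | steinerArray B t0 σ hσ T b = none} = v.choose t0 - k.choose t0 := by
  simp only [steinerArray_eq_none_iff, filter_not, card_univ_sdiff, Fintype.card_finset_len,
    hdes.1]
  congr 1
  rw [← hdes.2.1 b b.2, ← card_powersetCard]
  refine card_nbij Subtype.val (fun T hT => ?_) Subtype.val_injective.injOn (fun U hU => ?_)
  · exact mem_powersetCard.2 ⟨(mem_filter.1 hT).2, T.2⟩
  · obtain ⟨hUb, hU⟩ := mem_powersetCard.1 hU
    exact ⟨⟨U, hU⟩, by simpa using hUb, rfl⟩

theorem exists_steinerArray_eq_some [Fintype V] (hdes : IsSteinerSystem B t v k) (ht0 : t0 ≤ t)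
    (htv : t ≤ v) (hσ' : ∀ b ∈ B, Set.SurjOn (σ b) (b.powersetCard t0) (b.powersetCard t0))
    (S : {T : Finset V // #T = t0}) : ∃ T b, steinerArray B t0 σ hσ T b = some S := by
  obtain ⟨b, hb, hSb⟩ := hdes.exists_superset (S.2.trans_le ht0) htv
  obtain ⟨T, hT, hTS⟩ := hσ' b hb (mem_powersetCard.2 ⟨hSb, S.2⟩)
  obtain ⟨hTb, hTn⟩ := mem_powersetCard.1 hT
  exact ⟨⟨T, hTn⟩, ⟨b, hb⟩, steinerArray_eq_some_iff.2 ⟨hTb, hTS⟩⟩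

theorem eq_of_steinerArray_eq_some_of_subset [Fintype V] (hdes : IsSteinerSystem B t v k) (ht : t ≤ 2 * t0)
    (hdisj : ∀ b ∈ B, ∀ T ∈ b.powersetCard t0, Disjoint T (σ b T))
    {T₁ T₂ S : {T : Finset V // #T = t0}} {b₁ b₂ : B}
    (h₁ : steinerArray B t0 σ hσ T₁ b₁ = some S) (h₂ : steinerArray B t0 σ hσ T₂ b₂ = some S)
    (hT₁b₂ : T₁.1 ⊆ b₂) : b₁ = b₂ := by
  obtain ⟨hT₁, hS₁⟩ := steinerArray_eq_some_iff.1 h₁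
  obtain ⟨hT₂, hS₂⟩ := steinerArray_eq_some_iff.1 h₂
  have hSb : ∀ {T : {T : Finset V // #T = t0}} {b : B}, T.1 ⊆ b → σ b T = S → S.1 ⊆ b :=
    fun {T b} hT hS => hS ▸ (mem_powersetCard.1 (hσ b b.2 (mem_powersetCard.2 ⟨hT, T.2⟩))).1
  have hcard : t ≤ #(T₁.1 ∪ S.1) := by
    rw [card_union_of_disjoint (hS₁ ▸ hdisj b₁ b₁.2 T₁ (mem_powersetCard.2 ⟨hT₁, T₁.2⟩)),
      T₁.2, S.2]
    omega
  exact Subtype.ext <| hdes.eq_of_subset hcard b₁.2 b₂.2 (union_subset hT₁ (hSb hT₁ hS₁))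
    (union_subset hT₁b₂ (hSb hT₂ hS₂))

theorem isPDAOn_steinerArray [Fintype V] (hdes : IsSteinerSystem B t v k) (ht0 : t0 ≤ t) (ht : t ≤ 2 * t0)
    (htv : t ≤ v) (hbij : ∀ b ∈ B, Set.BijOn (σ b) (b.powersetCard t0) (b.powersetCard t0))
    (hdisj : ∀ b ∈ B, ∀ T ∈ b.powersetCard t0, Disjoint T (σ b T)) :
    IsPDAOn (v.choose t0 - k.choose t0) (steinerArray B t0 σ fun b hb => (hbij b hb).mapsTo) := by
  refine ⟨card_filter_steinerArray_eq_none hdes,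
    exists_steinerArray_eq_some hdes ht0 htv fun b hb => (hbij b hb).surjOn, ?_⟩
  intro T₁ T₂ b₁ b₂ S hne h₁ h₂
  obtain ⟨hT₁, hS₁⟩ := steinerArray_eq_some_iff.1 h₁
  obtain ⟨hT₂, hS₂⟩ := steinerArray_eq_some_iff.1 h₂
  have hb : b₁ ≠ b₂ := by
    rintro rfl
    have : T₁ = T₂ := Subtype.ext <| (hbij b₁ b₁.2).injOn (mem_powersetCard.2 ⟨hT₁, T₁.2⟩)
      (mem_powersetCard.2 ⟨hT₂, T₂.2⟩) (hS₁.trans hS₂.symm)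
    exact hne (by rw [this])
  have h₁₂ : ¬ T₁.1 ⊆ b₂ := fun h => hb (eq_of_steinerArray_eq_some_of_subset hdes ht hdisj h₁ h₂ h)
  have h₂₁ : ¬ T₂.1 ⊆ b₁ := fun h => hb (eq_of_steinerArray_eq_some_of_subset hdes ht hdisj h₂ h₁ h).symm
  refine ⟨?_, hb, steinerArray_eq_none_iff.2 h₁₂, steinerArray_eq_none_iff.2 h₂₁⟩
  rintro rfl
  exact h₁₂ hT₂

end SteinerArray

theorem exists_pda_of_steiner_small_t_three_general {V : Type} [Fintype V] [DecidableEq V]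
    (B : Finset (Finset V)) (t v k t0 : ℕ) (hkv : k < v)
    (hdes : IsSteinerSystem B t v k)
    (ht2 : 2 * t ≤ k + 2) (ht0l : t ≤ 2 * t0) (ht0u : t0 ≤ t - 1) :
    ExistsPDA (Nat.choose v t / Nat.choose k t) (Nat.choose v t0)
      (Nat.choose v t0 - Nat.choose k t0) (Nat.choose v t0) := by
  have htk : t ≤ k := by omega
  have hperm : ∀ b ∈ B, ∃ σ : Finset V → Finset V,
      Set.BijOn σ (b.powersetCard t0) (b.powersetCard t0) ∧
        ∀ T ∈ b.powersetCard t0, Disjoint T (σ T) := fun b hb =>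
    exists_bijOn_powersetCard_disjoint (by rw [hdes.2.1 b hb]; omega)
  choose! σ hbij hdisj using hperm
  have hK : Fintype.card B = v.choose t / k.choose t := by
    rw [Fintype.card_coe, ← hdes.card_mul_choose, Nat.mul_div_cancel _ (Nat.choose_pos htk)]
  have hF : Fintype.card {T : Finset V // #T = t0} = v.choose t0 := by
    rw [Fintype.card_finset_len, hdes.1]
  simpa only [hK, hF] using
    ExistsPDA.of_isPDAOn (isPDAOn_steinerArray hdes (by omega) ht0l (by omega) hbij hdisj)

/-- Steiner-system construction (`t ≤ k/2 + 1`), parameter set 3: a `t`-`(v,k,1)`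
design with `t ≤ k/2 + 1` and `t/2 ≤ t0 ≤ t - 1` yields a PDA with
`K = b = C(v,t)/C(k,t)`, `F = C(v,t0)`, `Q = C(v,t0) - C(k,t0)`, `S = C(v,t0)`. -/
theorem exists_pda_of_steiner_small_t_three {V : Type} [Fintype V] [DecidableEq V]
    (B : Finset (Finset V)) (t v k t0 : ℕ) (ht : 0 < t) (htk : t ≤ k) (hkv : k < v)
    (hdes : IsSteinerSystem B t v k)
    (ht2 : 2 * t ≤ k + 2) (ht0 : 0 < t0) (ht0l : t ≤ 2 * t0) (ht0u : t0 ≤ t - 1) :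
    ExistsPDA (Nat.choose v t / Nat.choose k t) (Nat.choose v t0)
      (Nat.choose v t0 - Nat.choose k t0) (Nat.choose v t0) :=
  exists_pda_of_steiner_small_t_three_general B t v k t0 hkv hdes ht2 ht0l ht0u
end

section
/- Suppose there exists a t-(v,k,1)-design with k/2 + 1 < t ≤ k, and let t1, t2 be positive integers with max{t1, t2} < t and t1 + t2 = k. Then there exists a (K,F,Q,S) placement delivery array with K = C(v,t1), F = C(v,t2), Q = C(v,t2) − λ_{t1}, and S = b, where λ_{t1} = C(v−t1, t−t1)/C(k−t1, t−t1) and b = C(v,t)/C(k,t). -/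
open Finset

section Aux


variable {V : Type} [Fintype V] [DecidableEq V]

/-- Number of `n`-subsets of `A` containing a fixed subset `S0`. -/
lemma card_supersets (A S0 : Finset V) (hS : S0 ⊆ A) (n : ℕ) (hn : S0.card ≤ n) :
    ((A.powersetCard n).filter fun T => S0 ⊆ T).card
      = (A.card - S0.card).choose (n - S0.card) := by
  rw [← card_sdiff_of_subset hS, ← Finset.card_powersetCard]
  refine Finset.card_bij' (fun T _ => T \ S0) (fun U _ => S0 ∪ U) ?_ ?_ ?_ ?_
  · intro T hT
    simp only [mem_filter, Finset.mem_powersetCard] at hT ⊢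
    exact ⟨sdiff_subset_sdiff hT.1.1 le_rfl, by rw [card_sdiff_of_subset hT.2, hT.1.2]⟩
  · intro U hU
    simp only [Finset.mem_powersetCard] at hU
    have hdisj : Disjoint S0 U :=
      (Finset.disjoint_sdiff (s := S0) (t := A)).mono_right hU.1
    simp only [mem_filter, Finset.mem_powersetCard]
    refine ⟨⟨union_subset hS (hU.1.trans sdiff_subset), ?_⟩, subset_union_left⟩
    rw [card_union_of_disjoint hdisj, hU.2, Nat.add_sub_cancel' hn]
  · intro T hT
    simp only [mem_filter] at hT
    exact union_sdiff_of_subset hT.2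
  · intro U hU
    simp only [Finset.mem_powersetCard] at hU
    have hdisj : Disjoint S0 U :=
      (Finset.disjoint_sdiff (s := S0) (t := A)).mono_right hU.1
    exact union_sdiff_cancel_left hdisj




lemma lambda_mul (B : Finset (Finset V)) (t v k : ℕ) (htk : t ≤ k)
    (hcard : Fintype.card V = v) (hblk : ∀ blk ∈ B, blk.card = k)
    (hdes : ∀ T : Finset V, T.card = t → (B.filter fun blk => T ⊆ blk).card = 1)
    (S0 : Finset V) (hs : S0.card ≤ t) :
    (B.filter fun blk => S0 ⊆ blk).card * (k - S0.card).choose (t - S0.card)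
      = (v - S0.card).choose (t - S0.card) := by
  classical
  set X := (Finset.univ.powersetCard t).filter (fun T => S0 ⊆ T) with hX
  have hXcard : X.card = (v - S0.card).choose (t - S0.card) := by
    rw [hX, card_supersets _ _ (subset_univ _) _ hs, card_univ, hcard]
  rw [← hXcard]
  symm
  have key : ∀ blk ∈ B, (X.filter fun T => T ⊆ blk).card
      = if S0 ⊆ blk then (k - S0.card).choose (t - S0.card) else 0 := by
    intro blk hb
    split_ifs with h
    · rw [← hblk blk hb, ← card_supersets blk S0 h t hs]
      congr 1
      ext T
      simp only [hX, mem_filter, Finset.mem_powersetCard, subset_univ, true_and]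
      tauto
    · rw [Finset.card_eq_zero, Finset.filter_eq_empty_iff]
      intro T hT
      simp only [hX, mem_filter] at hT
      exact fun hTb => h (hT.2.trans hTb)
  calc X.card = ∑ T ∈ X, 1 := by rw [Finset.sum_const, smul_eq_mul, mul_one]
    _ = ∑ T ∈ X, (B.filter fun blk => T ⊆ blk).card := by
        refine Finset.sum_congr rfl fun T hT => ?_
        simp only [hX, mem_filter, Finset.mem_powersetCard] at hT
        exact (hdes T hT.1.2).symm
    _ = ∑ T ∈ X, ∑ blk ∈ B, if T ⊆ blk then 1 else 0 := by
        exact Finset.sum_congr rfl fun T _ => Finset.card_filter _ _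
    _ = ∑ blk ∈ B, ∑ T ∈ X, if T ⊆ blk then 1 else 0 := Finset.sum_comm
    _ = ∑ blk ∈ B, (X.filter fun T => T ⊆ blk).card := by
        exact Finset.sum_congr rfl fun blk _ => (Finset.card_filter _ _).symm
    _ = ∑ blk ∈ B, if S0 ⊆ blk then (k - S0.card).choose (t - S0.card) else 0 :=
        Finset.sum_congr rfl key
    _ = (B.filter fun blk => S0 ⊆ blk).card * (k - S0.card).choose (t - S0.card) := by
        rw [← Finset.sum_filter, Finset.sum_const, smul_eq_mul]

noncomputable section

/-- The entry of the PDA at column-set `i` and row-set `j`. -/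
def pdaEntry (B : Finset (Finset V)) (i j : Finset V) : Option {blk // blk ∈ B} :=
  if h : Disjoint i j ∧ i ∪ j ∈ B then some ⟨i ∪ j, h.2⟩ else none

lemma pdaEntry_eq_some_iff {B : Finset (Finset V)} {i j : Finset V} {b : {blk // blk ∈ B}} :
    pdaEntry B i j = some b ↔ Disjoint i j ∧ i ∪ j = b.val := by
  unfold pdaEntry
  split_ifs with h
  · simp only [Option.some_inj]
    constructor
    · rintro rfl; exact ⟨h.1, rfl⟩
    · rintro ⟨-, hu⟩; exact Subtype.ext hu
  · simp only [false_iff, not_and]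
    intro hd hu
    exact h ⟨hd, hu ▸ b.property⟩

lemma pdaEntry_eq_none_iff {B : Finset (Finset V)} {i j : Finset V} :
    pdaEntry B i j = none ↔ ¬(Disjoint i j ∧ i ∪ j ∈ B) := by
  unfold pdaEntry
  split_ifs with h <;> simp [h]

end

end Aux

/-- Steiner-system construction (`k/2 + 1 < t ≤ k`), parameter set 1: a `t`-`(v,k,1)`
design with `k/2 + 1 < t ≤ k`, and positive `t1, t2` with `max{t1,t2} < t` and
`t1 + t2 = k`, yields a PDA with `K = C(v,t1)`, `F = C(v,t2)`,
`Q = C(v,t2) - λ_{t1}`, `S = b = C(v,t)/C(k,t)`, where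
`λ_{t1} = C(v-t1,t-t1)/C(k-t1,t-t1)`. -/
theorem exists_pda_of_steiner_large_t_one {V : Type} [Fintype V] [DecidableEq V]
    (B : Finset (Finset V)) (t v k t1 t2 : ℕ) (ht : 0 < t) (htk : t ≤ k) (hkv : k < v)
    (hdes : IsSteinerSystem B t v k)
    (ht2 : k + 2 < 2 * t) (ht1pos : 0 < t1) (ht2pos : 0 < t2)
    (hmax : max t1 t2 < t) (hsum : t1 + t2 = k) :
    ExistsPDA (Nat.choose v t1) (Nat.choose v t2)
      (Nat.choose v t2 - Nat.choose (v - t1) (t - t1) / Nat.choose (k - t1) (t - t1))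
      (Nat.choose v t / Nat.choose k t) := by
  classical
  obtain ⟨hcardV, hblk, hdesT⟩ := hdes
  have ht1t : t1 < t := lt_of_le_of_lt (le_max_left _ _) hmax
  have ht2t : t2 < t := lt_of_le_of_lt (le_max_right _ _) hmax
  have ht1k : t1 ≤ k := by omega
  have ht2k : t2 ≤ k := by omega
  -- number of blocks
  have hb0 : B.card * k.choose t = v.choose t := by
    have h := lambda_mul B t v k htk hcardV hblk hdesT ∅ (by simp)
    simpa using h
  have hktpos : 0 < k.choose t := Nat.choose_pos htk
  have hScard : v.choose t / k.choose t = B.card := by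
    rw [← hb0, Nat.mul_div_cancel _ hktpos]
  -- the equivalences
  have hCc : Fintype.card {A : Finset V // A.card = t1} = v.choose t1 := by
    rw [Fintype.card_finset_len, hcardV]
  have hRc : Fintype.card {A : Finset V // A.card = t2} = v.choose t2 := by
    rw [Fintype.card_finset_len, hcardV]
  have hSc : Fintype.card {blk // blk ∈ B} = v.choose t / k.choose t := by
    rw [Fintype.card_coe, hScard]
  let eC : Fin (v.choose t1) ≃ {A : Finset V // A.card = t1} :=
    (Fintype.equivFinOfCardEq hCc).symm
  let eR : Fin (v.choose t2) ≃ {A : Finset V // A.card = t2} :=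
    (Fintype.equivFinOfCardEq hRc).symm
  let eS : Fin (v.choose t / k.choose t) ≃ {blk // blk ∈ B} :=
    (Fintype.equivFinOfCardEq hSc).symm
  refine ⟨fun j i => (pdaEntry B (eC i).val (eR j).val).map (fun b => eS.symm b), ?_, ?_, ?_⟩
  · -- C1
    intro i
    set T1 : Finset V := (eC i).val with hT1def
    have hT1 : T1.card = t1 := (eC i).2
    have step1 : (univ.filter fun j : Fin (v.choose t2) =>
          (pdaEntry B T1 (eR j).val).map (fun b => eS.symm b) = none).card
        = (univ.filter fun j : {A : Finset V // A.card = t2} =>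
            pdaEntry B T1 j.val = none).card := by
      refine Finset.card_equiv eR fun j => ?_
      simp [Option.map_eq_none_iff]
    rw [step1]
    have hsplit := Finset.card_filter_add_card_filter_not
      (s := (univ : Finset {A : Finset V // A.card = t2}))
      (p := fun j => pdaEntry B T1 j.val = none)
    have huniv : (univ : Finset {A : Finset V // A.card = t2}).card = v.choose t2 := by
      rw [card_univ, hRc]
    have hne : (univ.filter fun j : {A : Finset V // A.card = t2} =>
          ¬ pdaEntry B T1 j.val = none).card
        = (B.filter fun blk => T1 ⊆ blk).card := by
      refine Finset.card_bij' (fun j _ => T1 ∪ j.val)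
        (fun blk hb => ⟨blk \ T1, ?_⟩) ?_ ?_ ?_ ?_
      · -- card of blk \ T1
        rw [mem_filter] at hb
        rw [card_sdiff_of_subset hb.2, hblk _ hb.1, hT1]
        omega
      · intro j hj
        rw [mem_filter] at hj
        rw [pdaEntry_eq_none_iff, not_not] at hj
        exact mem_filter.mpr ⟨hj.2.2, subset_union_left⟩
      · intro blk hb
        rw [mem_filter] at hb
        rw [mem_filter, pdaEntry_eq_none_iff, not_not]
        exact ⟨mem_univ _, disjoint_sdiff, by rw [union_sdiff_of_subset hb.2]; exact hb.1⟩
      · intro j hj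
        rw [mem_filter] at hj
        rw [pdaEntry_eq_none_iff, not_not] at hj
        exact Subtype.ext (union_sdiff_cancel_left hj.2.1)
      · intro blk hb
        rw [mem_filter] at hb
        exact union_sdiff_of_subset hb.2
    -- the lambda value
    have hlam : (v - t1).choose (t - t1) / (k - t1).choose (t - t1)
        = (B.filter fun blk => T1 ⊆ blk).card := by
      have h := lambda_mul B t v k htk hcardV hblk hdesT T1 (by omega)
      rw [hT1] at h
      have hpos : 0 < (k - t1).choose (t - t1) := Nat.choose_pos (by omega)
      rw [← h, Nat.mul_div_cancel _ hpos]
    omega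
  · -- C2
    intro s
    have hbB : (eS s).val ∈ B := (eS s).2
    have hbk : (eS s).val.card = k := hblk _ hbB
    obtain ⟨T1, hT1sub, hT1card⟩ :=
      Finset.exists_subset_card_eq (show t1 ≤ (eS s).val.card by omega)
    have hT2card : ((eS s).val \ T1).card = t2 := by
      rw [card_sdiff_of_subset hT1sub, hbk, hT1card]; omega
    refine ⟨eR.symm ⟨(eS s).val \ T1, hT2card⟩, eC.symm ⟨T1, hT1card⟩, ?_⟩
    simp only [Equiv.apply_symm_apply]
    have hent : pdaEntry B T1 ((eS s).val \ T1) = some (eS s) :=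
      pdaEntry_eq_some_iff.mpr ⟨disjoint_sdiff, union_sdiff_of_subset hT1sub⟩
    rw [hent, Option.map_some, Equiv.symm_apply_apply]
  · -- C3
    intro j₁ j₂ k₁ k₂ s hne h1 h2
    simp only [Option.map_eq_some_iff] at h1 h2
    obtain ⟨b₁, hb₁, hbs₁⟩ := h1
    obtain ⟨b₂, hb₂, hbs₂⟩ := h2
    have hb₁' : b₁ = eS s := by rw [← hbs₁, Equiv.apply_symm_apply]
    have hb₂' : b₂ = eS s := by rw [← hbs₂, Equiv.apply_symm_apply]
    subst hb₁' hb₂'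
    rw [pdaEntry_eq_some_iff] at hb₁ hb₂
    obtain ⟨hd1, hu1⟩ := hb₁
    obtain ⟨hd2, hu2⟩ := hb₂
    set blkS : Finset V := (eS s).val with hblkS
    have hbk : blkS.card = k := hblk _ (eS s).2
    -- fill lemma
    have fill : ∀ Tc Jr : Finset V, Tc.card = t1 → Jr.card = t2 → Tc ⊆ blkS →
        Jr ⊆ blkS → Disjoint Tc Jr → Tc ∪ Jr = blkS := by
      intro Tc Jr hc1 hc2 hs1 hs2 hd
      refine Finset.eq_of_subset_of_card_le (union_subset hs1 hs2) ?_
      rw [card_union_of_disjoint hd, hc1, hc2, hbk, hsum]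
    have hkne : k₁ ≠ k₂ := by
      rintro rfl
      have hval : (eR j₁).val = (eR j₂).val := by
        calc (eR j₁).val = ((eC k₁).val ∪ (eR j₁).val) \ (eC k₁).val :=
              (union_sdiff_cancel_left hd1).symm
          _ = ((eC k₁).val ∪ (eR j₂).val) \ (eC k₁).val := by rw [hu1, hu2]
          _ = (eR j₂).val := union_sdiff_cancel_left hd2
      exact hne (by rw [eR.injective (Subtype.ext hval)])
    have hjne : j₁ ≠ j₂ := by
      rintro rfl
      have hval : (eC k₁).val = (eC k₂).val := by
        calc (eC k₁).val = ((eC k₁).val ∪ (eR j₁).val) \ (eR j₁).val :=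
              (union_sdiff_cancel_right hd1).symm
          _ = ((eC k₂).val ∪ (eR j₁).val) \ (eR j₁).val := by rw [hu1, hu2]
          _ = (eC k₂).val := union_sdiff_cancel_right hd2
      exact hne (by rw [eC.injective (Subtype.ext hval)])
    refine ⟨hjne, hkne, ?_, ?_⟩
    · rw [Option.map_eq_none_iff, pdaEntry_eq_none_iff]
      rintro ⟨hd, -⟩
      have hu : (eC k₂).val ∪ (eR j₁).val = blkS :=
        fill _ _ (eC k₂).2 (eR j₁).2
          (subset_union_left.trans hu2.le)
          (subset_union_right.trans hu1.le) hd
      have hval : (eC k₂).val = (eC k₁).val := by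
        calc (eC k₂).val = ((eC k₂).val ∪ (eR j₁).val) \ (eR j₁).val :=
              (union_sdiff_cancel_right hd).symm
          _ = ((eC k₁).val ∪ (eR j₁).val) \ (eR j₁).val := by rw [hu, hu1]
          _ = (eC k₁).val := union_sdiff_cancel_right hd1
      exact hkne (eC.injective (Subtype.ext hval)).symm
    · rw [Option.map_eq_none_iff, pdaEntry_eq_none_iff]
      rintro ⟨hd, -⟩
      have hu : (eC k₁).val ∪ (eR j₂).val = blkS :=
        fill _ _ (eC k₁).2 (eR j₂).2
          (subset_union_left.trans hu1.le)
          (subset_union_right.trans hu2.le) hd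
      have hval : (eR j₂).val = (eR j₁).val := by
        calc (eR j₂).val = ((eC k₁).val ∪ (eR j₂).val) \ (eC k₁).val :=
              (union_sdiff_cancel_left hd).symm
          _ = ((eC k₁).val ∪ (eR j₁).val) \ (eC k₁).val := by rw [hu, hu1]
          _ = (eR j₁).val := union_sdiff_cancel_left hd1
      exact hjne (eR.injective (Subtype.ext hval)).symm
end

section
/- Suppose there exists a t-(v,k,1)-design with k/2 + 1 < t ≤ k, and let t1, t2 be positive integers with max{t1, t2} < t and t1 + t2 = k. Then there exists a (K,F,Q,S) placement delivery array with K = C(v,t1), F = b, Q = b − λ_{t1}, and S = C(v,t2), where λ_{t1} = C(v−t1, t−t1)/C(k−t1, t−t1) and b = C(v,t)/C(k,t). -/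
open Finset

/-!
Rows are the blocks, columns the `t1`-subsets `T`, and the entry at `(b, T)` is the `t2`-set
`b \ T` when `T ⊆ b` and `*` otherwise, so a column has `#B - λ_{t1}` stars. If the same
`t2`-set `S` sits at `(b₁, T₁)` and `(b₂, T₂)` with `T₂ ⊆ b₁`, then `b₁ ⊇ T₂ ∪ S = b₂`, and the
two blocks coincide since they have the same size. Every `t2`-set occurs because it extends to a
`t`-set, which lies in a block.
-/

theorem existsPDA_of_equiv {ι κ σ : Type*} [Fintype ι] [DecidableEq σ] {K F Q S : ℕ}
    (A : ι → κ → Option σ) (eF : Fin F ≃ ι) (eK : Fin K ≃ κ) (eS : Fin S ≃ σ)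
    (hstar : ∀ c, #{i | A i c = none} = Q)
    (hsurj : ∀ s, ∃ i c, A i c = some s)
    (hdeliv : ∀ i₁ i₂ c₁ c₂ s, (i₁, c₁) ≠ (i₂, c₂) → A i₁ c₁ = some s → A i₂ c₂ = some s →
      i₁ ≠ i₂ ∧ c₁ ≠ c₂ ∧ A i₁ c₂ = none ∧ A i₂ c₁ = none) :
    ExistsPDA K F Q S := by
  have hsome {j c s} : (A (eF j) (eK c)).map eS.symm = some s ↔ A (eF j) (eK c) = some (eS s) := by
    simp only [Option.map_eq_some_iff, Equiv.symm_apply_eq, exists_eq_right]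
  refine ⟨fun j c => (A (eF j) (eK c)).map eS.symm, fun c => ?_, fun s => ?_, ?_⟩
  · rw [← hstar (eK c), ← card_map eF.toEmbedding, map_filter]
    simp
  · obtain ⟨i, c, h⟩ := hsurj (eS s)
    exact ⟨eF.symm i, eK.symm c, by simp [h]⟩
  · intro j₁ j₂ c₁ c₂ s hne h₁ h₂
    have hne' : (eF j₁, eK c₁) ≠ (eF j₂, eK c₂) := by simpa using hne
    obtain ⟨hi, hc, hn₁, hn₂⟩ := hdeliv _ _ _ _ _ hne' (hsome.mp h₁) (hsome.mp h₂)
    exact ⟨ne_of_apply_ne eF hi, ne_of_apply_ne eK hc, by simp [hn₁], by simp [hn₂]⟩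

theorem Finset.eq_of_subset_of_sdiff_eq {α : Type*} [DecidableEq α] {b₁ b₂ T₁ T₂ : Finset α}
    (hcard : #b₁ = #b₂) (h₂ : T₂ ⊆ b₂) (hsd : b₁ \ T₁ = b₂ \ T₂) (hT : T₂ ⊆ b₁) : b₁ = b₂ := by
  have hsub : b₂ ⊆ b₁ := by
    rw [← union_sdiff_of_subset h₂, ← hsd]
    exact union_subset hT sdiff_subset
  exact (eq_of_subset_of_card_le hsub hcard.le).symm

section BlockArray

variable {V : Type*} [DecidableEq V] (B : Finset (Finset V)) {t₁ t₂ : ℕ}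
  (hB : ∀ b ∈ B, #b = t₁ + t₂)

def blockArray (b : B) (T : {T : Finset V // #T = t₁}) : Option {S : Finset V // #S = t₂} :=
  if h : T.1 ⊆ b.1 then
    some ⟨b.1 \ T.1, by rw [card_sdiff_of_subset h, hB b b.2, T.2, Nat.add_sub_cancel_left]⟩
  else none

variable {B hB}

theorem blockArray_eq_none_iff {b T} : blockArray B hB b T = none ↔ ¬ T.1 ⊆ b.1 := by
  unfold blockArray
  split_ifs with h <;> simp [h]

theorem blockArray_eq_some_iff {b T S} :
    blockArray B hB b T = some S ↔ T.1 ⊆ b.1 ∧ b.1 \ T.1 = S.1 := by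
  unfold blockArray
  split_ifs with h <;> simp [h, Subtype.ext_iff]

theorem card_blockArray_eq_none (T : {T : Finset V // #T = t₁}) :
    #{b | blockArray B hB b T = none} = #B - #{b ∈ B | T.1 ⊆ b} := by
  simp_rw [blockArray_eq_none_iff, univ_eq_attach]
  rw [filter_attach (fun b => ¬ T.1 ⊆ b), card_map, card_attach, filter_not,
    card_sdiff_of_subset (filter_subset _ _)]

theorem exists_blockArray_eq_some (hcover : ∀ S : Finset V, #S = t₂ → ∃ b ∈ B, S ⊆ b)
    (S : {S : Finset V // #S = t₂}) : ∃ b T, blockArray B hB b T = some S := by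
  obtain ⟨b, hb, hSb⟩ := hcover S.1 S.2
  refine ⟨⟨b, hb⟩, ⟨b \ S.1, by rw [card_sdiff_of_subset hSb, hB b hb, S.2, Nat.add_sub_cancel]⟩,
    blockArray_eq_some_iff.mpr ⟨sdiff_subset, Finset.sdiff_sdiff_eq_self hSb⟩⟩

theorem blockArray_eq_none_of_eq_some {b₁ b₂ T₁ T₂ S} (hne : (b₁, T₁) ≠ (b₂, T₂))
    (h₁ : blockArray B hB b₁ T₁ = some S) (h₂ : blockArray B hB b₂ T₂ = some S) :
    b₁ ≠ b₂ ∧ T₁ ≠ T₂ ∧ blockArray B hB b₁ T₂ = none ∧ blockArray B hB b₂ T₁ = none := by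
  obtain ⟨hT₁, hS₁⟩ := blockArray_eq_some_iff.mp h₁
  obtain ⟨hT₂, hS₂⟩ := blockArray_eq_some_iff.mp h₂
  simp_rw [blockArray_eq_none_iff]
  have hcard : #b₁.1 = #b₂.1 := by rw [hB _ b₁.2, hB _ b₂.2]
  have hsd : b₁.1 \ T₁.1 = b₂.1 \ T₂.1 := hS₁.trans hS₂.symm
  have hb : b₁ ≠ b₂ := by
    rintro rfl
    have hT : T₁ = T₂ := Subtype.ext <| by
      rw [← Finset.sdiff_sdiff_eq_self hT₁, hsd, Finset.sdiff_sdiff_eq_self hT₂]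
    exact hne (hT ▸ rfl)
  have h₂₁ : ¬ T₂.1 ⊆ b₁.1 := fun h => hb (Subtype.ext (eq_of_subset_of_sdiff_eq hcard hT₂ hsd h))
  have h₁₂ : ¬ T₁.1 ⊆ b₂.1 := fun h =>
    hb (Subtype.ext (eq_of_subset_of_sdiff_eq hcard.symm hT₁ hsd.symm h).symm)
  exact ⟨hb, fun h => h₁₂ (h ▸ hT₂), h₂₁, h₁₂⟩

end BlockArray

theorem existsPDA_of_regular_cover {V : Type*} [Fintype V] [DecidableEq V]
    (B : Finset (Finset V)) {t₁ t₂ r : ℕ} (hB : ∀ b ∈ B, #b = t₁ + t₂)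
    (hcover : ∀ S : Finset V, #S = t₂ → ∃ b ∈ B, S ⊆ b)
    (hreg : ∀ T : Finset V, #T = t₁ → #{b ∈ B | T ⊆ b} = r) :
    ExistsPDA ((Fintype.card V).choose t₁) #B (#B - r) ((Fintype.card V).choose t₂) :=
  existsPDA_of_equiv (blockArray B hB) B.equivFin.symm
    (Fintype.equivFinOfCardEq (Fintype.card_finset_len t₁)).symm
    (Fintype.equivFinOfCardEq (Fintype.card_finset_len t₂)).symm
    (fun T => by rw [card_blockArray_eq_none, hreg T.1 T.2])
    (exists_blockArray_eq_some hcover)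
    (fun _ _ _ _ _ => blockArray_eq_none_of_eq_some)

namespace IsSteinerSystem

variable {V : Type} [Fintype V] [DecidableEq V] {B : Finset (Finset V)} {t v k : ℕ}

theorem card_filter_superset_mul_choose (hB : IsSteinerSystem B t v k) {T : Finset V}
    (hT : #T ≤ t) :
    #{b ∈ B | T ⊆ b} * (k - #T).choose (t - #T) = (v - #T).choose (t - #T) := by
  obtain ⟨hv, hk, hunique⟩ := hB
  have hcount := card_mul_eq_card_mul (s := (univ.powersetCard t).filter (T ⊆ ·))
    (t := B.filter (T ⊆ ·)) (· ⊆ ·) (m := 1) (n := (k - #T).choose (t - #T))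
    (fun X hX => by
      obtain ⟨hXt, hTX⟩ := mem_filter.mp hX
      rw [← hunique X (mem_powersetCard.mp hXt).2, bipartiteAbove, filter_filter]
      exact congrArg card (filter_congr fun b _ => and_iff_right_of_imp hTX.trans))
    (fun b hb => by
      obtain ⟨hbB, hTb⟩ := mem_filter.mp hb
      rw [← hk b hbB, ← card_filter_powersetCard_subset T b t hTb hT, bipartiteBelow,
        filter_filter]
      congr 1
      ext X
      simp only [mem_filter, mem_powersetCard, subset_univ, true_and]
      tauto)
  rw [← hcount, mul_one, card_filter_powersetCard_subset T univ t (subset_univ T) hT, card_univ, hv]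

theorem card_filter_superset_eq (hB : IsSteinerSystem B t v k) (htk : t ≤ k) {T : Finset V}
    (hT : #T ≤ t) :
    #{b ∈ B | T ⊆ b} = (v - #T).choose (t - #T) / (k - #T).choose (t - #T) :=
  (Nat.div_eq_of_eq_mul_left (Nat.choose_pos (Nat.sub_le_sub_right htk _))
    (hB.card_filter_superset_mul_choose hT).symm).symm

theorem card_eq_choose_div (hB : IsSteinerSystem B t v k) (htk : t ≤ k) :
    #B = v.choose t / k.choose t := by
  simpa using hB.card_filter_superset_eq htk (T := ∅) (Nat.zero_le t)

theorem exists_superset_mem (hB : IsSteinerSystem B t v k) (htv : t ≤ v) {S : Finset V}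
    (hS : #S ≤ t) : ∃ b ∈ B, S ⊆ b := by
  obtain ⟨T, hST, -, hT⟩ :=
    exists_subsuperset_card_eq (subset_univ S) hS (by rwa [card_univ, hB.1])
  obtain ⟨b, hb⟩ := card_pos.mp (by rw [hB.2.2 T hT]; exact Nat.one_pos)
  obtain ⟨hbB, hTb⟩ := mem_filter.mp hb
  exact ⟨b, hbB, hST.trans hTb⟩

end IsSteinerSystem

theorem exists_pda_of_steiner_large_t_two_general {V : Type} [Fintype V] [DecidableEq V]
    (B : Finset (Finset V)) (t v k t1 t2 : ℕ) (htk : t ≤ k) (hkv : k < v)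
    (hdes : IsSteinerSystem B t v k)
    (hmax : max t1 t2 < t) (hsum : t1 + t2 = k) :
    ExistsPDA (Nat.choose v t1) (Nat.choose v t / Nat.choose k t)
      (Nat.choose v t / Nat.choose k t -
        Nat.choose (v - t1) (t - t1) / Nat.choose (k - t1) (t - t1))
      (Nat.choose v t2) := by
  have hblocks : ∀ b ∈ B, #b = t1 + t2 := fun b hb => hsum ▸ hdes.2.1 b hb
  have hcover : ∀ S : Finset V, #S = t2 → ∃ b ∈ B, S ⊆ b := fun S hS =>
    hdes.exists_superset_mem (by omega) (by omega)
  have hreg : ∀ T : Finset V, #T = t1 →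
      #{b ∈ B | T ⊆ b} = (v - t1).choose (t - t1) / (k - t1).choose (t - t1) := by
    rintro T rfl
    exact hdes.card_filter_superset_eq htk (by omega)
  have hpda := existsPDA_of_regular_cover B hblocks hcover hreg
  rwa [hdes.card_eq_choose_div htk, hdes.1] at hpda

/-- Steiner-system construction (`k/2 + 1 < t ≤ k`), parameter set 2: a `t`-`(v,k,1)`
design with `k/2 + 1 < t ≤ k`, and positive `t1, t2` with `max{t1,t2} < t` and
`t1 + t2 = k`, yields a PDA with `K = C(v,t1)`, `F = b`, `Q = b - λ_{t1}`,
`S = C(v,t2)`, where `λ_{t1} = C(v-t1,t-t1)/C(k-t1,t-t1)` and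
`b = C(v,t)/C(k,t)`. -/
theorem exists_pda_of_steiner_large_t_two {V : Type} [Fintype V] [DecidableEq V]
    (B : Finset (Finset V)) (t v k t1 t2 : ℕ) (ht : 0 < t) (htk : t ≤ k) (hkv : k < v)
    (hdes : IsSteinerSystem B t v k)
    (ht2 : k + 2 < 2 * t) (ht1pos : 0 < t1) (ht2pos : 0 < t2)
    (hmax : max t1 t2 < t) (hsum : t1 + t2 = k) :
    ExistsPDA (Nat.choose v t1) (Nat.choose v t / Nat.choose k t)
      (Nat.choose v t / Nat.choose k t -
        Nat.choose (v - t1) (t - t1) / Nat.choose (k - t1) (t - t1))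
      (Nat.choose v t2) :=
  exists_pda_of_steiner_large_t_two_general B t v k t1 t2 htk hkv hdes hmax hsum
end

section
/- Suppose there exists a t-(v,k,λ)-design with λ ≥ 1, and let t0, t1, t2 be positive integers with t0 = t1 + t2 ≤ t. Then there exists a (K,F,Q,S) placement delivery array with K = C(v,t1)·λ_{t1}, F = C(v,t2)·λ_{t2}, Q = C(v,t2)·λ_{t2} − C(k−t1, t2), and S = C(v,t0)·λ_{t0}, where λ_s = λ·C(v−s, t−s)/C(k−s, t−s) for 0 ≤ s ≤ t. -/
open Finset

/-- A `t`-`(v,k,λ)` design: `V` is a `v`-set, `B` a collection (multiset) of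
`k`-subsets of `V`, such that every `t`-subset of `V` lies in exactly `λ` blocks. -/
def IsTDesign {V : Type} [Fintype V] [DecidableEq V] (B : Multiset (Finset V))
    (t v k lam : ℕ) : Prop :=
  Fintype.card V = v ∧ (∀ blk ∈ B, blk.card = k) ∧
  (∀ T : Finset V, T.card = t → (B.filter fun blk => T ⊆ blk).card = lam)

/-- `λ_s = λ · C(v-s, t-s) / C(k-s, t-s)`, the number of blocks of a
`t`-`(v,k,λ)` design containing a fixed `s`-subset (`0 ≤ s ≤ t`). -/
def designLambda (lam v k t s : ℕ) : ℕ :=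
  lam * Nat.choose (v - s) (t - s) / Nat.choose (k - s) (t - s)

/-! ### Auxiliary lemmas -/

lemma card_filter_superset {V : Type} [DecidableEq V] (U A : Finset V) (hA : A ⊆ U) (m : ℕ)
    (hm : A.card ≤ m) :
    ((U.powersetCard m).filter fun T => A ⊆ T).card = (U.card - A.card).choose (m - A.card) := by
  rw [← card_sdiff_of_subset hA, ← card_powersetCard (m - A.card) (U \ A)]
  apply Finset.card_bij (fun T _ => T \ A)
  · intro T hT
    simp only [mem_filter, mem_powersetCard] at hT ⊢
    exact ⟨sdiff_subset_sdiff hT.1.1 le_rfl, by rw [card_sdiff_of_subset hT.2, hT.1.2]⟩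
  · intro T₁ h₁ T₂ h₂ h
    simp only [mem_filter, mem_powersetCard] at h₁ h₂
    rw [← sdiff_union_of_subset h₁.2, ← sdiff_union_of_subset h₂.2, h]
  · intro S hS
    simp only [mem_powersetCard] at hS
    have hdisj : Disjoint S A := (subset_sdiff.mp hS.1).2
    refine ⟨S ∪ A, ?_, ?_⟩
    · simp only [mem_filter, mem_powersetCard]
      refine ⟨⟨union_subset (hS.1.trans (sdiff_subset)) hA, ?_⟩, subset_union_right⟩
      rw [card_union_of_disjoint hdisj, hS.2]
      omega
    · rw [union_sdiff_right, sdiff_eq_self_of_disjoint hdisj]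

lemma card_filter_fin_get {α : Type} (L : List α) (q : α → Prop) [DecidablePred q] :
    (univ.filter fun i : Fin L.length => q (L.get i)).card
      = (Multiset.filter q (↑L : Multiset α)).card := by
  rw [Finset.card_filter, Multiset.filter_coe, Multiset.coe_card]
  simp only [List.get_eq_getElem]
  rw [Fin.sum_univ_fun_getElem L (fun a => if q a then 1 else 0)]
  induction L with
  | nil => simp
  | cons a l ih => by_cases h : q a <;> simp [h, List.filter_cons, ih, Nat.add_comm]

lemma design_count_mul {V : Type} [Fintype V] [DecidableEq V] (B : Multiset (Finset V))
    {t v k lam : ℕ} (hdes : IsTDesign B t v k lam) {s : ℕ} (hst : s ≤ t)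
    (A : Finset V) (hA : A.card = s) :
    (Multiset.card (B.filter fun blk => A ⊆ blk)) * (k - s).choose (t - s)
      = lam * (v - s).choose (t - s) := by
  obtain ⟨hv, hblk, hlam⟩ := hdes
  obtain ⟨L, rfl⟩ : ∃ L : List (Finset V), B = ↑L := ⟨B.toList, (Multiset.coe_toList B).symm⟩
  have hX : ∑ T ∈ (univ.powersetCard t).filter (fun T => A ⊆ T),
      Multiset.card (Multiset.filter (fun blk => T ⊆ blk) (↑L : Multiset (Finset V)))
        = lam * (v - s).choose (t - s) := by
    rw [Finset.sum_congr rfl (fun T hT => hlam T (mem_powersetCard.mp (mem_filter.mp hT).1).2)]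
    rw [Finset.sum_const, card_filter_superset _ _ (subset_univ A) t (by omega)]
    rw [card_univ, hv, hA, smul_eq_mul, mul_comm]
  rw [← hX]
  have hswap : ∀ T : Finset V,
      Multiset.card (Multiset.filter (fun blk => T ⊆ blk) (↑L : Multiset (Finset V)))
      = ∑ i : Fin L.length, if T ⊆ L.get i then 1 else 0 := fun T => by
    rw [← card_filter_fin_get, Finset.card_filter]
  rw [Finset.sum_congr rfl fun T _ => hswap T]
  rw [Finset.sum_comm]
  rw [hswap A, Finset.sum_mul]
  refine Finset.sum_congr rfl fun i _ => ?_
  have hmem : L.get i ∈ (↑L : Multiset (Finset V)) := by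
    rw [Multiset.mem_coe]; exact L.get_mem i
  have hcard : (L.get i).card = k := hblk _ hmem
  rw [← Finset.card_filter, Finset.filter_filter]
  by_cases hAb : A ⊆ L.get i
  · rw [if_pos hAb, one_mul]
    have hset : ((univ.powersetCard t).filter fun T => A ⊆ T ∧ T ⊆ L.get i)
        = ((L.get i).powersetCard t).filter fun T => A ⊆ T := by
      ext T
      simp only [mem_filter, mem_powersetCard, subset_univ, true_and]
      tauto
    rw [hset, card_filter_superset _ _ hAb t (by omega), hcard, hA]
  · rw [if_neg hAb, zero_mul]
    symm
    rw [Finset.card_eq_zero, Finset.filter_eq_empty_iff]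
    intro T _
    rintro ⟨h1, h2⟩
    exact hAb (h1.trans h2)

lemma design_count {V : Type} [Fintype V] [DecidableEq V] (B : Multiset (Finset V))
    {t v k lam : ℕ} (hdes : IsTDesign B t v k lam) (htk : t ≤ k) {s : ℕ} (hst : s ≤ t)
    (A : Finset V) (hA : A.card = s) :
    Multiset.card (B.filter fun blk => A ⊆ blk) = designLambda lam v k t s := by
  have h := design_count_mul B hdes hst A hA
  have hc : 0 < (k - s).choose (t - s) := Nat.choose_pos (by omega)
  rw [designLambda, ← h, Nat.mul_div_cancel _ hc]

lemma card_filter_equiv {α : Type} [DecidableEq α] {m : ℕ} {s : Finset α}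
    (e : Fin m ≃ {x // x ∈ s}) (q : α → Prop) [DecidablePred q] :
    (univ.filter fun j : Fin m => q (e j).1).card = (s.filter q).card := by
  apply Finset.card_bij (fun j _ => (e j).1)
  · intro j hj
    simp only [mem_filter] at hj ⊢
    exact ⟨(e j).2, hj.2⟩
  · intro j₁ _ j₂ _ h
    exact e.injective (Subtype.ext h)
  · intro a ha
    simp only [mem_filter] at ha
    refine ⟨e.symm ⟨a, ha.1⟩, ?_, by simp⟩
    simp [ha.2]

/-- `t`-design construction, parameter set 1: a `t`-`(v,k,λ)` design with `λ ≥ 1`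
and positive `t0, t1, t2` with `t0 = t1 + t2 ≤ t` yields a PDA with
`K = C(v,t1)·λ_{t1}`, `F = C(v,t2)·λ_{t2}`, `Q = C(v,t2)·λ_{t2} - C(k-t1,t2)`,
`S = C(v,t0)·λ_{t0}`. -/
theorem exists_pda_of_design_one {V : Type} [Fintype V] [DecidableEq V]
    (B : Multiset (Finset V)) (t v k lam t0 t1 t2 : ℕ)
    (ht : 0 < t) (htk : t ≤ k) (hkv : k < v) (hlam : 1 ≤ lam)
    (hdes : IsTDesign B t v k lam)
    (ht0 : 0 < t0) (ht1 : 0 < t1) (ht2 : 0 < t2)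
    (hsum : t0 = t1 + t2) (ht0t : t0 ≤ t) :
    ExistsPDA (Nat.choose v t1 * designLambda lam v k t t1)
      (Nat.choose v t2 * designLambda lam v k t t2)
      (Nat.choose v t2 * designLambda lam v k t t2 - Nat.choose (k - t1) t2)
      (Nat.choose v t0 * designLambda lam v k t t0) := by
  have ht1t : t1 ≤ t := by omega
  have ht2t : t2 ≤ t := by omega
  obtain ⟨hv, hblk, hlam'⟩ := id hdes
  obtain ⟨L, rfl⟩ : ∃ L : List (Finset V), B = ↑L := ⟨B.toList, (Multiset.coe_toList B).symm⟩
  set n := L.length with hn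
  have hblk' : ∀ i : Fin n, (L.get i).card = k := fun i =>
    hblk _ (by rw [Multiset.mem_coe]; exact L.get_mem i)
  -- index sets
  set cols : Finset (Finset V × Fin n) :=
    (univ.powersetCard t1 ×ˢ univ).filter (fun p => p.1 ⊆ L.get p.2) with hcols
  set rows : Finset (Finset V × Fin n) :=
    (univ.powersetCard t2 ×ˢ univ).filter (fun p => p.1 ⊆ L.get p.2) with hrows
  set syms : Finset (Finset V × Fin n) :=
    (univ.powersetCard t0 ×ˢ univ).filter (fun p => p.1 ⊆ L.get p.2) with hsyms
  -- cardinalities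
  have hcard_gen : ∀ s : ℕ, s ≤ t →
      (((univ.powersetCard s ×ˢ (univ : Finset (Fin n)))).filter
        (fun p => p.1 ⊆ L.get p.2)).card = Nat.choose v s * designLambda lam v k t s := by
    intro s hs
    rw [Finset.card_filter, Finset.sum_product]
    have hterm : ∀ A ∈ (univ : Finset V).powersetCard s,
        (∑ i : Fin n, if A ⊆ L.get i then 1 else 0) = designLambda lam v k t s := by
      intro A hA
      rw [← Finset.card_filter, card_filter_fin_get,
        design_count _ hdes htk hs A (mem_powersetCard.mp hA).2]
    rw [Finset.sum_congr rfl hterm, Finset.sum_const, card_powersetCard, card_univ, hv,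
      smul_eq_mul]
  have hcardC : cols.card = Nat.choose v t1 * designLambda lam v k t t1 := hcard_gen t1 ht1t
  have hcardR : rows.card = Nat.choose v t2 * designLambda lam v k t t2 := hcard_gen t2 ht2t
  have hcardS : syms.card = Nat.choose v t0 * designLambda lam v k t t0 := hcard_gen t0 ht0t
  -- equivalences
  have eK : Fin (Nat.choose v t1 * designLambda lam v k t t1) ≃ {x // x ∈ cols} :=
    (Fintype.equivFinOfCardEq (by rw [Fintype.card_coe, hcardC])).symm
  have eF : Fin (Nat.choose v t2 * designLambda lam v k t t2) ≃ {x // x ∈ rows} :=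
    (Fintype.equivFinOfCardEq (by rw [Fintype.card_coe, hcardR])).symm
  have eS : {x // x ∈ syms} ≃ Fin (Nat.choose v t0 * designLambda lam v k t t0) :=
    Fintype.equivFinOfCardEq (by rw [Fintype.card_coe, hcardS])
  -- membership facts
  have hmemC : ∀ c : {x // x ∈ cols}, c.1.1.card = t1 ∧ c.1.1 ⊆ L.get c.1.2 := by
    intro c
    have := c.2
    simp only [hcols, mem_filter, mem_product, mem_powersetCard] at this
    exact ⟨this.1.1.2, this.2⟩
  have hmemR : ∀ r : {x // x ∈ rows}, r.1.1.card = t2 ∧ r.1.1 ⊆ L.get r.1.2 := by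
    intro r
    have := r.2
    simp only [hrows, mem_filter, mem_product, mem_powersetCard] at this
    exact ⟨this.1.1.2, this.2⟩
  have hmemS : ∀ (c : {x // x ∈ cols}) (r : {x // x ∈ rows}),
      c.1.2 = r.1.2 → Disjoint c.1.1 r.1.1 → (c.1.1 ∪ r.1.1, r.1.2) ∈ syms := by
    intro c r hi hd
    simp only [hsyms, mem_filter, mem_product, mem_powersetCard]
    refine ⟨⟨⟨subset_univ _, ?_⟩, mem_univ _⟩, ?_⟩
    · rw [card_union_of_disjoint hd, (hmemC c).1, (hmemR r).1, hsum]
    · exact union_subset (hi ▸ (hmemC c).2) (hmemR r).2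
  -- the PDA
  refine ⟨fun j kk =>
    if h : (eK kk).1.2 = (eF j).1.2 ∧ Disjoint (eK kk).1.1 (eF j).1.1 then
      some (eS ⟨((eK kk).1.1 ∪ (eF j).1.1, (eF j).1.2), hmemS _ _ h.1 h.2⟩)
    else none, ?_, ?_, ?_⟩
  · -- C1
    intro kk
    obtain ⟨hcA, hcB⟩ := hmemC (eK kk)
    have hstep : (univ.filter fun j =>
        (if h : (eK kk).1.2 = (eF j).1.2 ∧ Disjoint (eK kk).1.1 (eF j).1.1 then
          some (eS ⟨((eK kk).1.1 ∪ (eF j).1.1, (eF j).1.2), hmemS _ _ h.1 h.2⟩)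
        else none) = none)
        = univ.filter fun j =>
          (fun x : Finset V × Fin n => ¬((eK kk).1.2 = x.2 ∧ Disjoint (eK kk).1.1 x.1))
            (eF j).1 := by
      refine filter_congr fun j _ => ?_
      split_ifs with h <;> simp [h]
    rw [hstep, card_filter_equiv eF
        (fun x : Finset V × Fin n => ¬((eK kk).1.2 = x.2 ∧ Disjoint (eK kk).1.1 x.1)),
      Finset.filter_not, card_sdiff_of_subset (filter_subset _ _), hcardR]
    congr 1
    have hsd : (L.get (eK kk).1.2 \ (eK kk).1.1).card = k - t1 := by
      rw [card_sdiff_of_subset hcB, hblk' _, hcA]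
    rw [← hsd, ← card_powersetCard t2 (L.get (eK kk).1.2 \ (eK kk).1.1)]
    apply Finset.card_bij (fun x _ => x.1)
    · intro x hx
      simp only [mem_filter] at hx
      have hm := hmemR ⟨x, hx.1⟩
      have hxi := hx.2.1
      have hxd := hx.2.2
      rw [mem_powersetCard]
      exact ⟨subset_sdiff.mpr ⟨hxi ▸ hm.2, hxd.symm⟩, hm.1⟩
    · intro x₁ hx₁ x₂ hx₂ h
      simp only [mem_filter] at hx₁ hx₂
      exact Prod.ext h (hx₁.2.1.symm.trans hx₂.2.1)
    · intro C hC
      rw [mem_powersetCard] at hC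
      have hCsub : C ⊆ L.get (eK kk).1.2 := hC.1.trans sdiff_subset
      have hCd : Disjoint C (eK kk).1.1 := (subset_sdiff.mp hC.1).2
      refine ⟨(C, (eK kk).1.2), mem_filter.mpr ⟨?_, rfl, hCd.symm⟩, rfl⟩
      rw [hrows]
      exact mem_filter.mpr ⟨mem_product.mpr ⟨mem_powersetCard.mpr ⟨subset_univ _, hC.2⟩,
        mem_univ _⟩, hCsub⟩
  · -- C2
    intro s
    set y := eS.symm s with hy
    have hyP : y.1.1.card = t0 ∧ y.1.1 ⊆ L.get y.1.2 := by
      have := y.2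
      simp only [hsyms, mem_filter, mem_product, mem_powersetCard] at this
      exact ⟨this.1.1.2, this.2⟩
    obtain ⟨A, hAsub, hAcard⟩ := Finset.exists_subset_card_eq (show t1 ≤ y.1.1.card by omega)
    set C : Finset V := y.1.1 \ A with hC
    have hCcard : C.card = t2 := by
      rw [hC, card_sdiff_of_subset hAsub, hyP.1, hAcard]; omega
    have hcmem : (A, y.1.2) ∈ cols := by
      rw [hcols]
      exact mem_filter.mpr ⟨mem_product.mpr ⟨mem_powersetCard.mpr ⟨subset_univ _, hAcard⟩,
        mem_univ _⟩, (hAsub.trans hyP.2)⟩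
    have hrmem : (C, y.1.2) ∈ rows := by
      rw [hrows]
      exact mem_filter.mpr ⟨mem_product.mpr ⟨mem_powersetCard.mpr ⟨subset_univ _, hCcard⟩,
        mem_univ _⟩, ((sdiff_subset).trans hyP.2)⟩
    refine ⟨eF.symm ⟨(C, y.1.2), hrmem⟩, eK.symm ⟨(A, y.1.2), hcmem⟩, ?_⟩
    simp only [Equiv.apply_symm_apply]
    rw [dif_pos ⟨trivial, disjoint_sdiff⟩,
      show s = eS y from by rw [hy, Equiv.apply_symm_apply]]
    exact congrArg (fun z => some (eS z))
      (Subtype.ext (Prod.ext (union_sdiff_of_subset hAsub) rfl))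
  · -- C3
    intro j₁ j₂ k₁ k₂ s hne h1 h2
    dsimp only at h1 h2 ⊢
    split_ifs at h1 with hP1
    split_ifs at h2 with hP2
    obtain ⟨hi1, hd1⟩ := hP1
    obtain ⟨hi2, hd2⟩ := hP2
    have hkey := eS.injective ((Option.some.inj h1).trans (Option.some.inj h2).symm)
    obtain ⟨hD, hi⟩ : ((eK k₁).1.1 ∪ (eF j₁).1.1 = (eK k₂).1.1 ∪ (eF j₂).1.1)
        ∧ ((eF j₁).1.2 = (eF j₂).1.2) :=
      Prod.ext_iff.mp (congrArg Subtype.val hkey)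
    have hAA : (eK k₁).1.1 = (eK k₂).1.1 → k₁ = k₂ := fun h =>
      eK.injective (Subtype.ext (Prod.ext h (hi1.trans (hi.trans hi2.symm))))
    have hCC : (eF j₁).1.1 = (eF j₂).1.1 → j₁ = j₂ := fun h =>
      eF.injective (Subtype.ext (Prod.ext h hi))
    have hA_of_C : (eF j₁).1.1 = (eF j₂).1.1 → (eK k₁).1.1 = (eK k₂).1.1 := by
      intro h
      rw [← union_sdiff_cancel_right hd1, ← union_sdiff_cancel_right hd2, hD, h]
    have hC_of_A : (eK k₁).1.1 = (eK k₂).1.1 → (eF j₁).1.1 = (eF j₂).1.1 := by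
      intro h
      rw [← union_sdiff_cancel_left hd1, ← union_sdiff_cancel_left hd2, hD, h]
    have hne_j : j₁ ≠ j₂ := by
      intro h
      exact hne (by rw [h, hAA (hA_of_C (congrArg (fun x => (eF x).1.1) h))])
    have hne_k : k₁ ≠ k₂ := by
      intro h
      exact hne (by rw [h, hCC (hC_of_A (congrArg (fun x => (eK x).1.1) h))])
    have hAne : (eK k₁).1.1 ≠ (eK k₂).1.1 := fun h => hne_k (hAA h)
    have hcardA1 : (eK k₁).1.1.card = t1 := (hmemC (eK k₁)).1
    have hcardA2 : (eK k₂).1.1.card = t1 := (hmemC (eK k₂)).1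
    refine ⟨hne_j, hne_k, ?_, ?_⟩
    · -- P j₁ k₂ = none
      obtain ⟨x, hx2, hx1⟩ := Finset.not_subset.mp
        (fun hsub => hAne (Finset.eq_of_subset_of_card_le hsub (by omega)).symm)
      have hxC1 : x ∈ (eF j₁).1.1 := by
        have hxD : x ∈ (eK k₁).1.1 ∪ (eF j₁).1.1 := by
          rw [hD]; exact mem_union_left _ hx2
        exact (mem_union.mp hxD).resolve_left hx1
      exact dif_neg fun hcond => disjoint_left.mp hcond.2 hx2 hxC1
    · -- P j₂ k₁ = none
      obtain ⟨x, hx1, hx2⟩ := Finset.not_subset.mp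
        (fun hsub => hAne (Finset.eq_of_subset_of_card_le hsub (by omega)))
      have hxC2 : x ∈ (eF j₂).1.1 := by
        have hxD : x ∈ (eK k₂).1.1 ∪ (eF j₂).1.1 := by
          rw [← hD]; exact mem_union_left _ hx1
        exact (mem_union.mp hxD).resolve_left hx2
      exact dif_neg fun hcond => disjoint_left.mp hcond.2 hx1 hxC2
end

section
/- If there exist a (K1,F1,Q1,S1) placement delivery array and a (K2,F2,Q2,S2) placement delivery array, then there exists a (K,F,Q,S) placement delivery array with K = K1·K2, F = F1·F2, Q = F1·Q2 + F2·Q1 − Q1·Q2, and S = S1·S2. -/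
open Finset

/-! Index the rows, columns and symbols of the product by pairs. Entry `((x, y), (u, v))` is `*`
when `P₁ x u` or `P₂ y v` is `*`, and the pair of their symbols otherwise. Column `(u, v)` then
has `(F₁ - Q₁)(F₂ - Q₂)` non-`*` entries, and C3 for two occurrences of a pair of symbols
follows from C3 in a factor in which the two positions differ. -/

lemma IsPDA.card_filter_ne_none_add {K F S Q : ℕ} {P : Fin F → Fin K → Option (Fin S)}
    (hP : IsPDA Q P) (k : Fin K) : #{j | P j k ≠ none} + Q = F := by
  rw [← hP.1 k, add_comm, card_filter_add_card_filter_not, card_univ, Fintype.card_fin]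

lemma product_star_count {F₁ F₂ Q₁ Q₂ n₁ n₂ X : ℕ} (h₁ : n₁ + Q₁ = F₁) (h₂ : n₂ + Q₂ = F₂)
    (h : X + n₁ * n₂ = F₁ * F₂) : X = F₁ * Q₂ + F₂ * Q₁ - Q₁ * Q₂ := by
  subst h₁ h₂
  refine eq_tsub_of_add_eq ?_
  linarith

section ProductArray

variable {K₁ F₁ S₁ K₂ F₂ S₂ : ℕ}

def productArray (P₁ : Fin F₁ → Fin K₁ → Option (Fin S₁))
    (P₂ : Fin F₂ → Fin K₂ → Option (Fin S₂)) :
    Fin (F₁ * F₂) → Fin (K₁ * K₂) → Option (Fin (S₁ * S₂)) := fun j k =>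
  Option.map₂ (fun s₁ s₂ => finProdFinEquiv (s₁, s₂))
    (P₁ (finProdFinEquiv.symm j).1 (finProdFinEquiv.symm k).1)
    (P₂ (finProdFinEquiv.symm j).2 (finProdFinEquiv.symm k).2)

variable {P₁ : Fin F₁ → Fin K₁ → Option (Fin S₁)} {P₂ : Fin F₂ → Fin K₂ → Option (Fin S₂)}

lemma productArray_eq_none_iff (x : Fin F₁) (y : Fin F₂) (u : Fin K₁) (v : Fin K₂) :
    productArray P₁ P₂ (finProdFinEquiv (x, y)) (finProdFinEquiv (u, v)) = none ↔
      P₁ x u = none ∨ P₂ y v = none := by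
  simp [productArray, Option.map₂_eq_none_iff]

lemma productArray_eq_some_iff (x : Fin F₁) (y : Fin F₂) (u : Fin K₁) (v : Fin K₂)
    (a : Fin S₁) (b : Fin S₂) :
    productArray P₁ P₂ (finProdFinEquiv (x, y)) (finProdFinEquiv (u, v)) =
        some (finProdFinEquiv (a, b)) ↔ P₁ x u = some a ∧ P₂ y v = some b := by
  simp [productArray, Option.map₂_eq_some_iff]

lemma card_filter_productArray_ne_none (u : Fin K₁) (v : Fin K₂) :
    #{j | productArray P₁ P₂ j (finProdFinEquiv (u, v)) ≠ none} =
      #{x | P₁ x u ≠ none} * #{y | P₂ y v ≠ none} := by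
  rw [← card_product, ← card_map finProdFinEquiv.toEmbedding]
  congr 1
  ext j
  obtain ⟨⟨x, y⟩, rfl⟩ := finProdFinEquiv.surjective j
  simp [productArray_eq_none_iff, not_or]

lemma isPDA_productArray {Q₁ Q₂ : ℕ} (h₁ : IsPDA Q₁ P₁) (h₂ : IsPDA Q₂ P₂) :
    IsPDA (F₁ * Q₂ + F₂ * Q₁ - Q₁ * Q₂) (productArray P₁ P₂) := by
  obtain ⟨-, hsym₁, hC3₁⟩ := id h₁
  obtain ⟨-, hsym₂, hC3₂⟩ := id h₂
  refine ⟨fun k => ?_, fun s => ?_, fun j₁ j₂ k₁ k₂ s hne hs₁ hs₂ => ?_⟩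
  · obtain ⟨⟨u, v⟩, rfl⟩ := finProdFinEquiv.surjective k
    have hcard := card_filter_add_card_filter_not (s := univ)
      (fun j => productArray P₁ P₂ j (finProdFinEquiv (u, v)) = none)
    rw [card_filter_productArray_ne_none, card_univ, Fintype.card_fin] at hcard
    exact product_star_count (h₁.card_filter_ne_none_add u) (h₂.card_filter_ne_none_add v) hcard
  · obtain ⟨⟨a, b⟩, rfl⟩ := finProdFinEquiv.surjective s
    obtain ⟨x, u, hxu⟩ := hsym₁ a
    obtain ⟨y, v, hyv⟩ := hsym₂ b
    exact ⟨_, _, (productArray_eq_some_iff x y u v a b).2 ⟨hxu, hyv⟩⟩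
  · obtain ⟨⟨x₁, y₁⟩, rfl⟩ := finProdFinEquiv.surjective j₁
    obtain ⟨⟨x₂, y₂⟩, rfl⟩ := finProdFinEquiv.surjective j₂
    obtain ⟨⟨u₁, v₁⟩, rfl⟩ := finProdFinEquiv.surjective k₁
    obtain ⟨⟨u₂, v₂⟩, rfl⟩ := finProdFinEquiv.surjective k₂
    obtain ⟨⟨a, b⟩, rfl⟩ := finProdFinEquiv.surjective s
    rw [productArray_eq_some_iff] at hs₁ hs₂
    simp only [ne_eq, EmbeddingLike.apply_eq_iff_eq, Prod.mk.injEq, productArray_eq_none_iff]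
    by_cases h : (x₁, u₁) = (x₂, u₂)
    · obtain ⟨rfl, rfl⟩ := Prod.mk.inj h
      have h' : (y₁, v₁) ≠ (y₂, v₂) := fun h' => hne (by simp_all)
      obtain ⟨hy, hv, hn₁, hn₂⟩ := hC3₂ _ _ _ _ _ h' hs₁.2 hs₂.2
      exact ⟨fun h => hy h.2, fun h => hv h.2, .inr hn₁, .inr hn₂⟩
    · obtain ⟨hx, hu, hn₁, hn₂⟩ := hC3₁ _ _ _ _ _ h hs₁.1 hs₂.1
      exact ⟨fun h => hx h.1, fun h => hu h.1, .inl hn₁, .inl hn₂⟩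

end ProductArray

theorem exists_pda_direct_product_general (K1 F1 Q1 S1 K2 F2 Q2 S2 : ℕ)
    (h1 : ExistsPDA K1 F1 Q1 S1) (h2 : ExistsPDA K2 F2 Q2 S2) :
    ExistsPDA (K1 * K2) (F1 * F2) (F1 * Q2 + F2 * Q1 - Q1 * Q2) (S1 * S2) := by
  obtain ⟨P₁, hP₁⟩ := h1
  obtain ⟨P₂, hP₂⟩ := h2
  exact ⟨productArray P₁ P₂, isPDA_productArray hP₁ hP₂⟩

/-- **Direct product of PDAs.** If there exist a `(K1,F1,Q1,S1)` PDA and a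
`(K2,F2,Q2,S2)` PDA, then there exists a `(K,F,Q,S)` PDA with `K = K1·K2`,
`F = F1·F2`, `Q = F1·Q2 + F2·Q1 - Q1·Q2`, and `S = S1·S2`. -/
theorem exists_pda_direct_product (K1 F1 Q1 S1 K2 F2 Q2 S2 : ℕ)
    (hK1 : 0 < K1) (hF1 : 0 < F1) (hQ1 : 0 < Q1) (hS1 : 0 < S1) (hQF1 : Q1 < F1)
    (hK2 : 0 < K2) (hF2 : 0 < F2) (hQ2 : 0 < Q2) (hS2 : 0 < S2) (hQF2 : Q2 < F2)
    (h1 : ExistsPDA K1 F1 Q1 S1) (h2 : ExistsPDA K2 F2 Q2 S2) :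
    ExistsPDA (K1 * K2) (F1 * F2) (F1 * Q2 + F2 * Q1 - Q1 * Q2) (S1 * S2) :=
  exists_pda_direct_product_general K1 F1 Q1 S1 K2 F2 Q2 S2 h1 h2
end
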